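/- For positive definite A, B and t ∈ [0,1], d_BW(A, A◇_t B) = t·d_BW(A,B): the Bures-Wasserstein geodesic is parametrized proportionally to arc length. -/

import Mathlib

open Matrix Filter Asymptotics
open scoped ComplexOrder

/-- The PSD square root of a matrix (0 if not PSD). -/
noncomputable def msqrt {n : ℕ} (M : Matrix (Fin n) (Fin n) ℂ) : Matrix (Fin n) (Fin n) ℂ :=
  letI := Classical.propDecidable M.PosSemidef
  if h : M.PosSemidef then
    (h.1.eigenvectorUnitary : Matrix (Fin n) (Fin n) ℂ) *
      diagonal (((↑) : ℝ → ℂ) ∘ (√·) ∘ h.1.eigenvalues) *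
      (star h.1.eigenvectorUnitary : Matrix (Fin n) (Fin n) ℂ)
  else 0

/-- `(AB)^{1/2} := A^{1/2} (A^{1/2} B A^{1/2})^{1/2} A^{-1/2}`. -/
noncomputable def sqAB {n : ℕ} (A B : Matrix (Fin n) (Fin n) ℂ) : Matrix (Fin n) (Fin n) ℂ :=
  msqrt A * msqrt (msqrt A * B * msqrt A) * (msqrt A)⁻¹

/-- Bures-Wasserstein geodesic `A ◇_t B`. -/
noncomputable def geo {n : ℕ} (A B : Matrix (Fin n) (Fin n) ℂ) (t : ℝ) : Matrix (Fin n) (Fin n) ℂ :=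
  ((1 - t)^2 : ℝ) • A + (t^2 : ℝ) • B + (t * (1 - t) : ℝ) • (sqAB A B + (sqAB A B)ᴴ)

/-- Bures-Wasserstein distance. -/
noncomputable def dBW {n : ℕ} (A B : Matrix (Fin n) (Fin n) ℂ) : ℝ :=
  Real.sqrt ((Matrix.trace A).re + (Matrix.trace B).re -
    2 * (Matrix.trace (msqrt (msqrt A * B * msqrt A))).re)


/-!
Write `S = A^{1/2}` and `R = (S B S)^{1/2}`. Conjugating by `S` turns the geodesic into a
perfect square, `S (A ◇_t B) S = ((1 - t) A + t R)²`, and `(1 - t) A + t R` is positive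
semidefinite for `t ∈ [0, 1]`, so it is the square root entering `d_BW(A, A ◇_t B)`. Since
`(AB)^{1/2} = S R S⁻¹` has the trace of `R`, the radicand of `d_BW(A, A ◇_t B)` collapses to
`t²` times that of `d_BW(A, B)`.
-/

open scoped MatrixOrder

section

variable {n : ℕ}

lemma msqrt_eq_cfcSqrt {M : Matrix (Fin n) (Fin n) ℂ} (hM : M.PosSemidef) :
    msqrt M = CFC.sqrt M := by
  rw [msqrt, dif_pos hM, CFC.sqrt_eq_cfc, cfc_nnreal_eq_real _ M hM.nonneg, hM.1.cfc_eq]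
  simp only [IsHermitian.cfc, Unitary.conjStarAlgAut_apply]
  congr 3
  funext x
  simp [Real.coe_sqrt, Real.coe_toNNReal', Function.comp, hM.eigenvalues_nonneg]

lemma posSemidef_msqrt (M : Matrix (Fin n) (Fin n) ℂ) : (msqrt M).PosSemidef := by
  by_cases hM : M.PosSemidef
  · rw [msqrt_eq_cfcSqrt hM]
    exact (CFC.sqrt_nonneg M).posSemidef
  · rw [msqrt, dif_neg hM]
    exact PosSemidef.zero

lemma msqrt_mul_msqrt {M : Matrix (Fin n) (Fin n) ℂ} (hM : M.PosSemidef) :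
    msqrt M * msqrt M = M := by
  rw [msqrt_eq_cfcSqrt hM]
  exact CFC.sqrt_mul_sqrt_self M hM.nonneg

lemma msqrt_mul_self {N : Matrix (Fin n) (Fin n) ℂ} (hN : N.PosSemidef) :
    msqrt (N * N) = N := by
  have hNN : (N * N).PosSemidef := by simpa only [sq] using hN.pow 2
  rw [msqrt_eq_cfcSqrt hNN, CFC.sqrt_eq_iff _ _ hNN.nonneg hN.nonneg]

lemma msqrt_mul_mul_msqrt {A : Matrix (Fin n) (Fin n) ℂ} (hA : A.PosSemidef) :
    msqrt A * A * msqrt A = A * A := by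
  set S := msqrt A
  have hSS : S * S = A := msqrt_mul_msqrt hA
  rw [← hSS]
  noncomm_ring

lemma posSemidef_msqrt_mul_mul_msqrt (A : Matrix (Fin n) (Fin n) ℂ)
    {B : Matrix (Fin n) (Fin n) ℂ} (hB : B.PosSemidef) : (msqrt A * B * msqrt A).PosSemidef := by
  simpa only [(posSemidef_msqrt A).1.eq] using hB.conjTranspose_mul_mul_same (msqrt A)

lemma isUnit_det_msqrt {A : Matrix (Fin n) (Fin n) ℂ} (hA : A.PosDef) : IsUnit (msqrt A).det := by
  have hAA : IsUnit (msqrt A * msqrt A) := by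
    rw [msqrt_mul_msqrt hA.posSemidef]
    exact hA.isUnit
  exact (isUnit_iff_isUnit_det _).mp (isUnit_of_mul_isUnit_left hAA)

section sqAB

variable (A B : Matrix (Fin n) (Fin n) ℂ)

lemma conjTranspose_sqAB :
    (sqAB A B)ᴴ = (msqrt A)⁻¹ * msqrt (msqrt A * B * msqrt A) * msqrt A := by
  rw [sqAB, conjTranspose_mul, conjTranspose_mul, conjTranspose_nonsing_inv,
    (posSemidef_msqrt A).1.eq, (posSemidef_msqrt _).1.eq, ← Matrix.mul_assoc (msqrt A)⁻¹]

variable {A}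

lemma msqrt_mul_sqAB_mul_msqrt (hA : A.PosDef) :
    msqrt A * sqAB A B * msqrt A = A * msqrt (msqrt A * B * msqrt A) := by
  calc msqrt A * sqAB A B * msqrt A
      = msqrt A * msqrt A * msqrt (msqrt A * B * msqrt A) * ((msqrt A)⁻¹ * msqrt A) := by
        rw [sqAB]; noncomm_ring
    _ = A * msqrt (msqrt A * B * msqrt A) := by
        rw [msqrt_mul_msqrt hA.posSemidef, nonsing_inv_mul _ (isUnit_det_msqrt hA), mul_one]

lemma msqrt_mul_conjTranspose_sqAB_mul_msqrt (hA : A.PosDef) :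
    msqrt A * (sqAB A B)ᴴ * msqrt A = msqrt (msqrt A * B * msqrt A) * A := by
  calc msqrt A * (sqAB A B)ᴴ * msqrt A
      = msqrt A * (msqrt A)⁻¹ * msqrt (msqrt A * B * msqrt A) * (msqrt A * msqrt A) := by
        rw [conjTranspose_sqAB]; noncomm_ring
    _ = msqrt (msqrt A * B * msqrt A) * A := by
        rw [msqrt_mul_msqrt hA.posSemidef, mul_nonsing_inv _ (isUnit_det_msqrt hA), one_mul]

lemma trace_sqAB (hA : A.PosDef) : (sqAB A B).trace = (msqrt (msqrt A * B * msqrt A)).trace := by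
  rw [sqAB, trace_mul_cycle, nonsing_inv_mul _ (isUnit_det_msqrt hA), Matrix.one_mul]

end sqAB

section geo

variable {A : Matrix (Fin n) (Fin n) ℂ} (B : Matrix (Fin n) (Fin n) ℂ) (t : ℝ)

lemma msqrt_mul_geo_mul_msqrt (hA : A.PosDef) (hB : B.PosSemidef) :
    msqrt A * geo A B t * msqrt A =
      ((1 - t) • A + t • msqrt (msqrt A * B * msqrt A)) *
        ((1 - t) • A + t • msqrt (msqrt A * B * msqrt A)) := by
  have hR := msqrt_mul_msqrt (posSemidef_msqrt_mul_mul_msqrt A hB)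
  simp only [geo, Matrix.add_mul, Matrix.mul_add, Matrix.smul_mul, Matrix.mul_smul, smul_add]
  rw [msqrt_mul_mul_msqrt hA.posSemidef, msqrt_mul_sqAB_mul_msqrt B hA,
    msqrt_mul_conjTranspose_sqAB_mul_msqrt B hA]
  -- `set` hides `msqrt A * B * msqrt A` inside `R` from the rewrite
  set R := msqrt (msqrt A * B * msqrt A)
  rw [← hR]
  match_scalars <;> ring

lemma re_trace_geo (hA : A.PosDef) :
    (geo A B t).trace.re = (1 - t) ^ 2 * A.trace.re + t ^ 2 * B.trace.re
      + 2 * (t * (1 - t)) * (msqrt (msqrt A * B * msqrt A)).trace.re := by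
  simp only [geo, trace_add, trace_smul, trace_conjTranspose, trace_sqAB B hA, Complex.add_re,
    Complex.real_smul, Complex.re_ofReal_mul, Complex.star_def, Complex.conj_re]
  ring

end geo

end

theorem stmt8 {n : ℕ} (A B : Matrix (Fin n) (Fin n) ℂ)
    (hA : A.PosDef) (hB : B.PosDef) (t : ℝ) (ht0 : 0 ≤ t) (ht1 : t ≤ 1) :
    dBW A (geo A B t) = t * dBW A B := by
  set R := msqrt (msqrt A * B * msqrt A)
  have hM : ((1 - t) • A + t • R).PosSemidef :=
    (hA.posSemidef.smul (sub_nonneg.mpr ht1)).add ((posSemidef_msqrt _).smul ht0)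
  have hsqrt : msqrt (msqrt A * geo A B t * msqrt A) = (1 - t) • A + t • R := by
    rw [msqrt_mul_geo_mul_msqrt B t hA hB.posSemidef, msqrt_mul_self hM]
  have hrad : A.trace.re + (geo A B t).trace.re - 2 * ((1 - t) • A + t • R).trace.re
      = t ^ 2 * (A.trace.re + B.trace.re - 2 * R.trace.re) := by
    simp only [re_trace_geo B t hA, trace_add, trace_smul, Complex.add_re, Complex.real_smul,
      Complex.re_ofReal_mul]
    ring
  rw [dBW, dBW, hsqrt, hrad, Real.sqrt_mul (sq_nonneg t), Real.sqrt_sq ht0]
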